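/- arXiv:2207.03623 — 2 statements merged into one kernel-verified Lean document; each statement's English description precedes it below -/
import Mathlib

section
/- Let C = (f(x_1,e_1), f(y_1,e_1), f(x_2,e_2), f(y_2,e_2), …, f(y_q,e_q), f(x_1,e_1)), with e_i = x_i y_i ∈ E(G), be a cycle in L_2^H(G) alternating between edges of E(L_2^H(G))\M_J and edges of M_J. Then the sequence in G that traverses the edges e_1, e_2, …, e_q in this order (changing lanes between consecutive parallel edges with the same ordered end pair, and otherwise continuing through the shared vertex) is a closed dynamic H-trail in G. -/
namespace DynH

/-- A multigraph without loops: each edge `e` has two distinct endpoints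
`G.fst e` and `G.snd e`. Parallel edges are allowed since `E` is an abstract
edge type. -/
structure Multigraph (V E : Type) where
  fst : E → V
  snd : E → V
  loopless : ∀ e, fst e ≠ snd e

variable {V E C : Type}

namespace Multigraph

/-- The vertex `x` is incident with the edge `e`. -/
def inc (G : Multigraph V E) (x : V) (e : E) : Prop := G.fst e = x ∨ G.snd e = x

/-- The edge `e` joins the vertices `x` and `y`. -/
def joins (G : Multigraph V E) (e : E) (x y : V) : Prop :=
  (G.fst e = x ∧ G.snd e = y) ∨ (G.fst e = y ∧ G.snd e = x)

/-- `e` and `g` have the same pair of end vertices. -/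
def parallel (G : Multigraph V E) (e g : E) : Prop :=
  (G.fst e = G.fst g ∧ G.snd e = G.snd g) ∨ (G.fst e = G.snd g ∧ G.snd e = G.fst g)

end Multigraph

instance Multigraph.decInc (G : Multigraph V E) [DecidableEq V] :
    ∀ (x : V) (e : E), Decidable (G.inc x e) := fun x e => by
  unfold Multigraph.inc; infer_instance

/-- The underlying simple graph of a multigraph (used to express connectedness). -/
def SupportGraph (G : Multigraph V E) : SimpleGraph V where
  Adj x y := x ≠ y ∧ ∃ e, G.joins e x y
  symm := ⟨by
    rintro x y ⟨hxy, e, he⟩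
    exact ⟨hxy.symm, e, he.symm⟩⟩
  loopless := ⟨fun x h => h.1 rfl⟩

/-- Vertices of `L_2^H(G)`: the incidences `f(x,e)`. -/
def L2V (G : Multigraph V E) : Type := {p : V × E // G.inc p.1 p.2}

instance (G : Multigraph V E) [DecidableEq V] [DecidableEq E] : DecidableEq (L2V G) := by
  unfold L2V; infer_instance

instance (G : Multigraph V E) [Fintype V] [Fintype E] [DecidableEq V] : Fintype (L2V G) := by
  unfold L2V; infer_instance

/-- Adjacency of `L_2^H(G)` (one-sided; it is symmetrized below, which changes
nothing when `adjH` is symmetric). -/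
def L2Adj (G : Multigraph V E) (adjH : C → C → Prop) (c : E → C) (p q : L2V G) : Prop :=
  (p.val.2 = q.val.2 ∧ p.val.1 ≠ q.val.1)
  ∨ (p.val.1 = q.val.1 ∧ p.val.2 ≠ q.val.2 ∧ adjH (c p.val.2) (c q.val.2))
  ∨ (p.val.1 ≠ q.val.1 ∧ p.val.2 ≠ q.val.2 ∧ G.parallel p.val.2 q.val.2)

/-- The auxiliary simple graph `L_2^H(G)`. -/
def L2Graph (G : Multigraph V E) (adjH : C → C → Prop) (c : E → C) :
    SimpleGraph (L2V G) where
  Adj p q := L2Adj G adjH c p q ∨ L2Adj G adjH c q p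
  symm := ⟨fun _ _ h => Or.symm h⟩
  loopless := ⟨fun p h => by
    rcases h with h | h <;> rcases h with ⟨_, h⟩ | ⟨_, h, _⟩ | ⟨h, _⟩ <;> exact h rfl⟩

/-- The joint matching `M_J = { f(x,e)f(y,e) : e = xy ∈ E(G) }` of `L_2^H(G)`. -/
def MJ (G : Multigraph V E) : Set (Sym2 (L2V G)) :=
  {s | ∃ p q : L2V G, s = s(p, q) ∧ p ≠ q ∧ p.val.2 = q.val.2}

/-- A matching of a simple graph, given as a set of edges. -/
def IsMatchingSet {α : Type} (Gr : SimpleGraph α) (M : Set (Sym2 α)) : Prop :=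
  M ⊆ Gr.edgeSet ∧ ∀ v : α, ∀ s ∈ M, ∀ t ∈ M, v ∈ s → v ∈ t → s = t

/-- A perfect matching of a simple graph, given as a set of edges. -/
def IsPerfectMatchingSet {α : Type} (Gr : SimpleGraph α) (M : Set (Sym2 α)) : Prop :=
  IsMatchingSet Gr M ∧ ∀ v : α, ∃ s ∈ M, v ∈ s

/-- Every entry `(x, y, e)` of the list records a traversal of an edge `e`
joining `x` and `y` (from `x` to `y`). -/
def GoodEntries (G : Multigraph V E) (L : List (V × V × E)) : Prop :=
  ∀ t ∈ L, G.joins t.2.2 t.1 t.2.1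

/-- The list of edges underlying a list of edge traversals. -/
def edgesOf (L : List (V × V × E)) : List E := L.map fun t => t.2.2

/-- Allowed consecutive pair in a dynamic `H`-trail: either a transition through a
common vertex with colors adjacent in `H`, or a lane change between parallel edges. -/
def DynStep (G : Multigraph V E) (adjH : C → C → Prop) (c : E → C)
    (a b : V × V × E) : Prop :=
  (a.2.1 = b.1 ∧ adjH (c a.2.2) (c b.2.2))
  ∨ (a.1 = b.1 ∧ a.2.1 = b.2.1 ∧ a.2.2 ≠ b.2.2 ∧ G.parallel a.2.2 b.2.2)

/-- Allowed consecutive pair in an `H`-trail: transition through a common vertex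
with colors adjacent in `H`. -/
def HStep (adjH : C → C → Prop) (c : E → C) (a b : V × V × E) : Prop :=
  a.2.1 = b.1 ∧ adjH (c a.2.2) (c b.2.2)

/-- A closed dynamic `H`-trail, encoded as the cyclic list of its edge traversals. -/
def IsClosedDynHTrail (G : Multigraph V E) (adjH : C → C → Prop) (c : E → C)
    (L : List (V × V × E)) : Prop :=
  L ≠ [] ∧ (edgesOf L).Nodup ∧ GoodEntries G L ∧
    ∀ p ∈ L.zip (L.rotate 1), DynStep G adjH c p.1 p.2

/-- A closed `H`-trail, encoded as the cyclic list of its edge traversals. -/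
def IsClosedHTrail (G : Multigraph V E) (adjH : C → C → Prop) (c : E → C)
    (L : List (V × V × E)) : Prop :=
  L ≠ [] ∧ (edgesOf L).Nodup ∧ GoodEntries G L ∧
    ∀ p ∈ L.zip (L.rotate 1), HStep adjH c p.1 p.2

/-- A (non-closed) dynamic `H`-trail. -/
def IsDynHTrail (G : Multigraph V E) (adjH : C → C → Prop) (c : E → C)
    (L : List (V × V × E)) : Prop :=
  L ≠ [] ∧ (edgesOf L).Nodup ∧ GoodEntries G L ∧
    ∀ p ∈ L.zip L.tail, DynStep G adjH c p.1 p.2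

/-- A (non-closed) `H`-trail. -/
def IsHTrail (G : Multigraph V E) (adjH : C → C → Prop) (c : E → C)
    (L : List (V × V × E)) : Prop :=
  L ≠ [] ∧ (edgesOf L).Nodup ∧ GoodEntries G L ∧
    ∀ p ∈ L.zip L.tail, HStep adjH c p.1 p.2

/-- A cycle in `L_2^H(G)` (as a cyclic list of distinct vertices) which alternates
between edges of the joint matching `M_J` (at even positions) and edges of
`E(L_2^H(G)) \ M_J` (at odd positions). -/
def IsAltCycle (G : Multigraph V E) (adjH : C → C → Prop) (c : E → C)
    (vs : List (L2V G)) : Prop :=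
  vs ≠ [] ∧ vs.Nodup ∧ 3 ≤ vs.length ∧
    ∀ k : Fin vs.length,
      (L2Graph G adjH c).Adj (vs.get k)
        (vs.get ⟨(k.val + 1) % vs.length, Nat.mod_lt _ (Nat.lt_of_le_of_lt (Nat.zero_le _) k.isLt)⟩) ∧
      (s(vs.get k,
          vs.get ⟨(k.val + 1) % vs.length,
            Nat.mod_lt _ (Nat.lt_of_le_of_lt (Nat.zero_le _) k.isLt)⟩) ∈ MJ G ↔ k.val % 2 = 0)

/-- The simple graph `G_x` on the edges of `G` incident with `x`; two such edges are
adjacent iff their colors are adjacent in `H`. (Symmetrized; this changes nothing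
when `adjH` is symmetric.) -/
def GxGraph (G : Multigraph V E) (adjH : C → C → Prop) (c : E → C) (x : V) :
    SimpleGraph {e : E // G.inc x e} where
  Adj a b := a ≠ b ∧ (adjH (c a.val) (c b.val) ∨ adjH (c b.val) (c a.val))
  symm := ⟨by rintro a b ⟨hab, h⟩; exact ⟨hab.symm, h.symm⟩⟩
  loopless := ⟨fun a h => h.1 rfl⟩

end DynH

/-!
Reading the cycle in matched pairs `f(x_i,e_i) f(y_i,e_i)` gives the traversals `(x_i, y_i, e_i)`.
A non-matching edge `f(y_i,e_i) f(x_{i+1},e_{i+1})` of `L_2^H(G)` either stays at the vertex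
`y_i = x_{i+1}` with `H`-adjacent colours, an ordinary transition, or joins distinct ends of
parallel edges; then `x_{i+1}` is an end of `e_i` other than `y_i`, so `x_{i+1} = x_i` and
`y_{i+1} = y_i`, a lane change. An edge traversed twice would put a third incidence `f(x_j,e_i)`
on the cycle besides `f(x_i,e_i)` and `f(y_i,e_i)`, contradicting that the cycle has no repeated
vertex.
-/

namespace List

theorem forall_mem_zip_rotate_one {α : Type*} {R : α → α → Prop} {l : List α}
    (h : ∀ i (hi : i < l.length), R l[i] (l[(i + 1) % l.length]'(Nat.mod_lt _ (by omega)))) :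
    ∀ p ∈ l.zip (l.rotate 1), R p.1 p.2 := by
  intro p hp
  obtain ⟨k, hk, rfl⟩ := List.getElem_of_mem hp
  simp only [List.length_zip, List.length_rotate, Nat.min_self] at hk
  simpa only [List.getElem_zip, List.getElem_rotate] using h k hk

end List

namespace DynH

namespace Multigraph

variable {G : Multigraph V E} {x y z : V} {e g : E}

theorem parallel.symm (h : G.parallel e g) : G.parallel g e := by
  rcases h with ⟨h1, h2⟩ | ⟨h1, h2⟩
  · exact Or.inl ⟨h1.symm, h2.symm⟩
  · exact Or.inr ⟨h2.symm, h1.symm⟩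

theorem parallel.inc (hp : G.parallel e g) (hx : G.inc x g) : G.inc x e := by
  rcases hp with ⟨h1, h2⟩ | ⟨h1, h2⟩ <;> rcases hx with hx | hx
  · exact Or.inl (h1.trans hx)
  · exact Or.inr (h2.trans hx)
  · exact Or.inr (h2.trans hx)
  · exact Or.inl (h1.trans hx)

theorem joins_of_inc (hx : G.inc x e) (hy : G.inc y e) (hxy : x ≠ y) : G.joins e x y := by
  rcases hx with hx | hx <;> rcases hy with hy | hy
  · exact absurd (hx.symm.trans hy) hxy
  · exact Or.inl ⟨hx, hy⟩
  · exact Or.inr ⟨hy, hx⟩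
  · exact absurd (hx.symm.trans hy) hxy

theorem joins.eq_or_eq_of_inc (hj : G.joins e x y) (hz : G.inc z e) : z = x ∨ z = y := by
  rcases hz with rfl | rfl <;> rcases hj with ⟨h1, h2⟩ | ⟨h1, h2⟩ <;> tauto

end Multigraph

section L2

variable {G : Multigraph V E} {adjH : C → C → Prop} {c : E → C} {p q r s : L2V G}

theorem mem_MJ_iff : s(p, q) ∈ MJ G ↔ p.val.1 ≠ q.val.1 ∧ p.val.2 = q.val.2 := by
  constructor
  · rintro ⟨a, b, hs, hab, h2⟩
    rcases Sym2.eq_iff.mp hs with ⟨rfl, rfl⟩ | ⟨rfl, rfl⟩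
    · exact ⟨fun h1 => hab (Subtype.ext (Prod.ext h1 h2)), h2⟩
    · exact ⟨fun h1 => hab (Subtype.ext (Prod.ext h1.symm h2)), h2.symm⟩
  · rintro ⟨h1, h2⟩
    exact ⟨p, q, rfl, fun h => h1 (congrArg (·.val.1) h), h2⟩

theorem joins_of_mem_MJ (h : s(p, q) ∈ MJ G) : G.joins p.val.2 p.val.1 q.val.1 := by
  obtain ⟨h1, h2⟩ := mem_MJ_iff.mp h
  exact Multigraph.joins_of_inc p.prop (h2 ▸ q.prop) h1

theorem eq_or_eq_of_mem_MJ (h : s(p, q) ∈ MJ G) (hr : r.val.2 = p.val.2) : r = p ∨ r = q := by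
  have hq : q.val.2 = p.val.2 := (mem_MJ_iff.mp h).2.symm
  exact ((joins_of_mem_MJ h).eq_or_eq_of_inc (hr ▸ r.prop)).imp
    (fun h1 => Subtype.ext (Prod.ext h1 hr)) (fun h1 => Subtype.ext (Prod.ext h1 (hr.trans hq.symm)))

theorem L2Graph_adj_of_ne (hH : Symmetric adjH) (hadj : (L2Graph G adjH c).Adj q r)
    (hne : q.val.2 ≠ r.val.2) :
    (q.val.1 = r.val.1 ∧ adjH (c q.val.2) (c r.val.2)) ∨
      (q.val.1 ≠ r.val.1 ∧ G.parallel q.val.2 r.val.2) := by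
  rcases hadj with (⟨h, -⟩ | ⟨h1, -, h3⟩ | ⟨h1, -, h3⟩) | (⟨h, -⟩ | ⟨h1, -, h3⟩ | ⟨h1, -, h3⟩)
  · exact absurd h hne
  · exact Or.inl ⟨h1, h3⟩
  · exact Or.inr ⟨h1, h3⟩
  · exact absurd h.symm hne
  · exact Or.inl ⟨h1.symm, hH h3⟩
  · exact Or.inr ⟨Ne.symm h1, h3.symm⟩

theorem dynStep_of_adj_of_not_mem_MJ (hH : Symmetric adjH) (hpq : s(p, q) ∈ MJ G)
    (hrs : s(r, s) ∈ MJ G) (hqr : (L2Graph G adjH c).Adj q r) (hqr' : s(q, r) ∉ MJ G) :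
    DynStep G adjH c (p.val.1, q.val.1, p.val.2) (r.val.1, s.val.1, r.val.2) := by
  obtain ⟨-, hpq2⟩ := mem_MJ_iff.mp hpq
  obtain ⟨hrs1, hrs2⟩ := mem_MJ_iff.mp hrs
  have hqr2 : q.val.2 ≠ r.val.2 := fun h => hqr' (mem_MJ_iff.mpr ⟨fun h1 =>
    hqr.ne (Subtype.ext (Prod.ext h1 h)), h⟩)
  rcases L2Graph_adj_of_ne hH hqr hqr2 with ⟨h1, hcol⟩ | ⟨h1, hpar⟩
  · exact Or.inl ⟨h1, hpq2 ▸ hcol⟩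
  · have hj := joins_of_mem_MJ hpq
    rw [← hpq2] at hpar hqr2
    have hr : r.val.1 = p.val.1 :=
      (hj.eq_or_eq_of_inc (hpar.inc r.prop)).resolve_right (Ne.symm h1)
    have hs : s.val.1 = q.val.1 :=
      (hj.eq_or_eq_of_inc (hpar.inc (hrs2 ▸ s.prop))).resolve_left (hr ▸ Ne.symm hrs1)
    exact Or.inr ⟨hr.symm, hs.symm, hqr2, hpar⟩

end L2

namespace IsAltCycle

variable {G : Multigraph V E} {adjH : C → C → Prop} {c : E → C} {vs : List (L2V G)}

theorem adj_and_mem_MJ_iff (h : IsAltCycle G adjH c vs) {k j : ℕ} (hk : k < vs.length)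
    (hj : j < vs.length) (hkj : (k + 1) % vs.length = j) :
    (L2Graph G adjH c).Adj vs[k] vs[j] ∧ (s(vs[k], vs[j]) ∈ MJ G ↔ k % 2 = 0) := by
  subst hkj
  exact h.2.2.2 ⟨k, hk⟩

theorem mem_MJ (h : IsAltCycle G adjH c vs) {i : ℕ} (hi : 2 * i + 1 < vs.length) :
    s(vs[2 * i], vs[2 * i + 1]) ∈ MJ G :=
  (h.adj_and_mem_MJ_iff (by omega) hi (Nat.mod_eq_of_lt hi)).2.mpr (by omega)

end IsAltCycle

def traversals {G : Multigraph V E} (vs : List (L2V G)) : List (V × V × E) :=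
  List.ofFn fun i : Fin (vs.length / 2) =>
    ((vs[2 * i.val]'(by omega)).val.1, (vs[2 * i.val + 1]'(by omega)).val.1,
      (vs[2 * i.val]'(by omega)).val.2)

section traversals

variable {G : Multigraph V E} {adjH : C → C → Prop} {c : E → C} {vs : List (L2V G)}

@[simp]
theorem length_traversals : (traversals vs).length = vs.length / 2 :=
  List.length_ofFn

theorem getElem_traversals {i : ℕ} (hi : i < (traversals vs).length) :
    (traversals vs)[i] =
      ((vs[2 * i]'(by simp at hi; omega)).val.1, (vs[2 * i + 1]'(by simp at hi; omega)).val.1,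
        (vs[2 * i]'(by simp at hi; omega)).val.2) :=
  List.getElem_ofFn ..

theorem goodEntries_traversals (h : IsAltCycle G adjH c vs) : GoodEntries G (traversals vs) := by
  intro t ht
  obtain ⟨i, hi, rfl⟩ := List.getElem_of_mem ht
  rw [length_traversals] at hi
  rw [getElem_traversals]
  exact joins_of_mem_MJ (h.mem_MJ (by omega))

theorem nodup_edgesOf_traversals (h : IsAltCycle G adjH c vs) :
    (edgesOf (traversals vs)).Nodup := by
  rw [edgesOf, traversals, List.map_ofFn, List.nodup_ofFn]
  intro i j hij
  have hi := i.isLt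
  have hj := j.isLt
  rcases eq_or_eq_of_mem_MJ (h.mem_MJ (i := i) (by omega)) hij.symm with hji | hji <;>
    · rw [h.2.1.getElem_inj_iff] at hji
      ext
      omega

theorem dynStep_traversals (hH : Symmetric adjH) (h : IsAltCycle G adjH c vs)
    (heven : vs.length % 2 = 0) {i : ℕ} (hi : i < (traversals vs).length) :
    DynStep G adjH c (traversals vs)[i]
      ((traversals vs)[(i + 1) % (traversals vs).length]'(Nat.mod_lt _ (by omega))) := by
  have hn : vs.length = 2 * (traversals vs).length := by rw [length_traversals]; omega
  have hj : (i + 1) % (traversals vs).length < (traversals vs).length := Nat.mod_lt _ (by omega)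
  have hsucc : (2 * i + 1 + 1) % vs.length = 2 * ((i + 1) % (traversals vs).length) := by
    rw [hn, ← Nat.mul_mod_mul_left, show 2 * i + 1 + 1 = 2 * (i + 1) by ring]
  obtain ⟨hadj, hMJ⟩ := h.adj_and_mem_MJ_iff (by omega) (by omega) hsucc
  rw [getElem_traversals, getElem_traversals]
  exact dynStep_of_adj_of_not_mem_MJ hH (h.mem_MJ (by omega)) (h.mem_MJ (by omega)) hadj
    (fun hm => by have := hMJ.mp hm; omega)

theorem isClosedDynHTrail_traversals (hH : Symmetric adjH) (h : IsAltCycle G adjH c vs)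
    (heven : vs.length % 2 = 0) : IsClosedDynHTrail G adjH c (traversals vs) :=
  ⟨List.ne_nil_of_length_pos (by rw [length_traversals]; have := h.2.2.1; omega),
    nodup_edgesOf_traversals h, goodEntries_traversals h,
    List.forall_mem_zip_rotate_one fun _ hi => dynStep_traversals hH h heven hi⟩

end traversals

/-- If `C` (encoded by the list of vertices `vs = [f(x_1,e_1), f(y_1,e_1), …,
f(x_q,e_q), f(y_q,e_q)]`) is a cycle of `L_2^H(G)` alternating between edges of
`E(L_2^H(G)) \ M_J` and edges of `M_J`, then traversing the edges `e_1, …, e_q` of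
`G` in this order (changing lanes between consecutive parallel edges, and otherwise
continuing through the shared vertex) yields a closed dynamic `H`-trail in `G`. -/
theorem altCycle_to_closedDynHTrail {V E C : Type} (G : Multigraph V E)
    (adjH : C → C → Prop) (hH : Symmetric adjH) (c : E → C)
    (vs : List (L2V G)) (hvs : IsAltCycle G adjH c vs) (heven : vs.length % 2 = 0) :
    ∃ L : List (V × V × E), IsClosedDynHTrail G adjH c L ∧
      ∃ hlen : vs.length = 2 * L.length,
        ∀ i (hi : i < L.length),
          (vs.get ⟨2 * i, by omega⟩).val = ((L.get ⟨i, hi⟩).1, (L.get ⟨i, hi⟩).2.2) ∧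
          (vs.get ⟨2 * i + 1, by omega⟩).val = ((L.get ⟨i, hi⟩).2.1, (L.get ⟨i, hi⟩).2.2) := by
  refine ⟨traversals vs, isClosedDynHTrail_traversals hH hvs heven,
    by rw [length_traversals]; omega, fun i hi => ?_⟩
  have hMJ := hvs.mem_MJ (i := i) (by rw [length_traversals] at hi; omega)
  simp only [List.get_eq_getElem, getElem_traversals, true_and]
  exact Prod.ext rfl (mem_MJ_iff.mp hMJ).2.symm

end DynH
end

section
/- If an H-colored multigraph G has a closed Euler dynamic H-trail, then L_n^H(G) is Hamiltonian for every n ≥ 2. -/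
namespace DynH

variable {V E C : Type}

/-- Adjacency for the auxiliary graph `L_n^H(G)` (`n ≥ 2`).  Its vertices are the
incidences `f(x,e)` together with, for each edge `e`, the `n - 2` intermediate
vertices of the subdividing path.  (One-sided relation; symmetrized in `LnGraph`.) -/
def LnAdj (G : Multigraph V E) (adjH : C → C → Prop) (c : E → C) (n : ℕ) :
    (L2V G ⊕ E × Fin (n - 2)) → (L2V G ⊕ E × Fin (n - 2)) → Prop
  | Sum.inl p, Sum.inl q =>
      (p.val.1 = q.val.1 ∧ p.val.2 ≠ q.val.2 ∧ adjH (c p.val.2) (c q.val.2))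
      ∨ (p.val.1 ≠ q.val.1 ∧ p.val.2 ≠ q.val.2 ∧ G.parallel p.val.2 q.val.2)
      ∨ (n = 2 ∧ p.val.2 = q.val.2 ∧ p.val.1 ≠ q.val.1)
  | Sum.inl p, Sum.inr gi =>
      p.val.2 = gi.1 ∧
        ((p.val.1 = G.fst gi.1 ∧ gi.2.val = 0) ∨ (p.val.1 = G.snd gi.1 ∧ gi.2.val = n - 3))
  | Sum.inr gi, Sum.inl p =>
      p.val.2 = gi.1 ∧
        ((p.val.1 = G.fst gi.1 ∧ gi.2.val = 0) ∨ (p.val.1 = G.snd gi.1 ∧ gi.2.val = n - 3))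
  | Sum.inr gi, Sum.inr gj =>
      gi.1 = gj.1 ∧ (gi.2.val + 1 = gj.2.val ∨ gj.2.val + 1 = gi.2.val)

/-- The auxiliary simple graph `L_n^H(G)`. -/
def LnGraph (G : Multigraph V E) (adjH : C → C → Prop) (c : E → C) (n : ℕ) :
    SimpleGraph (L2V G ⊕ E × Fin (n - 2)) where
  Adj a b := LnAdj G adjH c n a b ∨ LnAdj G adjH c n b a
  symm := ⟨fun _ _ h => Or.symm h⟩
  loopless := ⟨fun a h => by
    rcases a with p | gi <;>
      rcases h with h | h <;> simp [LnAdj] at h <;> omega⟩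

end DynH

/-!
Write the closed Euler dynamic `H`-trail as a cyclic list of edge traversals `(x, y, e)`.
Replace each traversal by the subdivided joint-matching edge of `e`, run from `f(x,e)` to
`f(y,e)`. Consecutive traversals `(x, y, e)`, `(x', y', e')` give an edge `f(y,e) f(x',e')` of
`L_n^H(G)`: for an `H`-transition `y = x'` and the colours of `e, e'` are adjacent in `H`; for a
lane change `e, e'` are parallel and `y ≠ x = x'`. The trail uses every edge of `G` exactly once,
so the concatenated paths pass through every vertex of `L_n^H(G)` exactly once and close up into
a Hamiltonian cycle.
-/

namespace DynH

section CyclicChain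

variable {α β : Type*}

def CyclicChain (R : α → α → Prop) (l : List α) : Prop := (l ++ l.take 1).IsChain R

theorem cyclicChain_iff_forall_mem_zip_rotate {R : α → α → Prop} {l : List α} :
    CyclicChain R l ↔ ∀ p ∈ l.zip (l.rotate 1), R p.1 p.2 := by
  cases l with
  | nil => simp [CyclicChain]
  | cons a l =>
    rw [CyclicChain, List.take_one, List.head?_cons, Option.toList_some,
      List.isChain_cons_append_singleton_iff_forall₂, List.forall₂_iff_zip,
      List.rotate_cons_succ, List.rotate_zero]
    simp

theorem CyclicChain.imp_of_mem {R S : α → α → Prop} {l : List α}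
    (H : ∀ a ∈ l, ∀ b ∈ l, R a b → S a b) (h : CyclicChain R l) : CyclicChain S l :=
  List.IsChain.imp_of_mem_imp (fun a b ha hb => H a (by grind) b (by grind)) h

theorem CyclicChain.and {R S : α → α → Prop} {l : List α} (hR : CyclicChain R l)
    (hS : CyclicChain S l) : CyclicChain (fun a b => R a b ∧ S a b) l :=
  List.isChain_iff_getElem.2 fun i hi => ⟨hR.getElem i hi, hS.getElem i hi⟩

theorem cyclicChain_map {R : α → α → Prop} (f : β → α) {l : List β} :
    CyclicChain R (l.map f) ↔ CyclicChain (fun a b => R (f a) (f b)) l := by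
  rw [CyclicChain, CyclicChain, ← List.map_take, ← List.map_append, List.isChain_map]

theorem cyclicChain_ne_of_nodup {l : List α} (hl : l.Nodup) (h2 : 2 ≤ l.length) :
    CyclicChain (· ≠ ·) l := by
  obtain ⟨a, b, r, rfl⟩ : ∃ a b r, l = a :: b :: r := by
    match l, h2 with
    | a :: b :: r, _ => exact ⟨a, b, r, rfl⟩
  have hrot : (b :: r ++ [a]).Nodup := (List.perm_append_singleton a _).nodup_iff.2 hl
  simpa [CyclicChain, List.isChain_cons_cons] using
    ⟨fun hab => (List.nodup_cons.1 hl).1 (hab ▸ List.mem_cons_self), hrot.isChain⟩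

theorem CyclicChain.flatMap {R : α → α → Prop} {f : β → List α} {l : List β}
    (hf : ∀ b ∈ l, f b ≠ []) (hchain : ∀ b ∈ l, (f b).IsChain R)
    (hl : CyclicChain (fun b b' => ∀ x ∈ (f b).getLast?, ∀ y ∈ (f b').head?, R x y) l) :
    CyclicChain R (l.flatMap f) := by
  have hwrap : ((l ++ l.take 1).flatMap f).IsChain R := by
    rw [List.flatMap_def, List.isChain_flatten (by grind), List.isChain_map]
    exact ⟨by grind, hl⟩
  refine hwrap.prefix ?_
  rw [List.flatMap_append]
  refine (List.prefix_append_right_inj _).2 ?_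
  cases l with
  | nil => simp
  | cons b l =>
    rw [List.flatMap_cons, List.take_append_of_le_length
      (List.length_pos_iff.2 (hf b List.mem_cons_self))]
    simpa using List.take_prefix 1 (f b)

theorem isHamiltonian_of_cyclicChain [Fintype α] [DecidableEq α]
    {Gr : SimpleGraph α} {l : List α} (hnd : l.Nodup) (hmem : ∀ v, v ∈ l)
    (hlen : 3 ≤ l.length) (hl : CyclicChain Gr.Adj l) : Gr.IsHamiltonian := by
  obtain ⟨a, l, rfl⟩ :=
    List.exists_cons_of_ne_nil (List.ne_nil_of_length_pos (l := l) (by omega))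
  have hchain : (a :: (l ++ [a])).IsChain Gr.Adj := by simpa [CyclicChain] using hl
  obtain ⟨p, hsupp⟩ : ∃ p : Gr.Walk a a, p.support = a :: (l ++ [a]) :=
    ⟨(SimpleGraph.Walk.ofSupport _ (List.cons_ne_nil _ _) hchain).copy rfl (by simp),
      (SimpleGraph.Walk.support_copy _ _ _).trans (SimpleGraph.Walk.support_ofSupport _ _)⟩
  have hlength : p.length = l.length + 1 := by
    simpa [hsupp] using p.length_support.symm
  have hnil : ¬ p.Nil := by
    rw [← SimpleGraph.Walk.length_eq_zero_iff, hlength]; omega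
  have htail : p.tail.support = l ++ [a] := by
    rw [SimpleGraph.Walk.support_tail_of_not_nil _ hnil, hsupp, List.tail_cons]
  have htail_perm : (l ++ [a]).Perm (a :: l) := List.perm_append_singleton a l
  refine fun _ => ⟨a, p, ?_⟩
  refine SimpleGraph.Walk.isHamiltonianCycle_iff_isCycle_and_support_count_tail_eq_one.2
    ⟨?_, ?_⟩
  · refine SimpleGraph.Walk.isCycle_iff_isPath_tail_and_le_length.2 ⟨?_, ?_⟩
    · rw [SimpleGraph.Walk.isPath_def, htail]
      exact htail_perm.nodup_iff.2 hnd
    · rw [hlength]; simpa using hlen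
  · intro v
    rw [← SimpleGraph.Walk.support_tail_of_not_nil _ hnil, htail, htail_perm.count_eq]
    exact List.count_eq_one_of_mem hnd (hmem v)

end CyclicChain

theorem isChain_map_finRange {α : Type*} {R : α → α → Prop} {m : ℕ} (f : Fin m → α)
    (h : ∀ i j : Fin m, i.val + 1 = j.val → R (f i) (f j)) :
    ((List.finRange m).map f).IsChain R :=
  List.isChain_map _ |>.2 <| List.isChain_iff_getElem.2 fun i hi => h _ _ (by simp)

theorem val_eq_zero_of_mem_head?_finRange {m : ℕ} {i : Fin m}
    (h : i ∈ (List.finRange m).head?) : i.val = 0 := by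
  simp only [List.head?_eq_getElem?, Option.mem_def, List.getElem?_eq_some_iff] at h
  obtain ⟨_, rfl⟩ := h; simp

theorem val_eq_of_mem_getLast?_finRange {m : ℕ} {i : Fin m}
    (h : i ∈ (List.finRange m).getLast?) : i.val = m - 1 := by
  simp only [List.getLast?_eq_getElem?, Option.mem_def, List.getElem?_eq_some_iff] at h
  obtain ⟨_, rfl⟩ := h; simp

section

variable {V E C : Type}

theorem Multigraph.joins.ne {G : Multigraph V E} {e : E} {x y : V} (h : G.joins e x y) :
    x ≠ y := by
  rcases h with ⟨h1, h2⟩ | ⟨h1, h2⟩ <;> exact fun hxy => G.loopless e (by rw [h1, h2, hxy])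

theorem Multigraph.joins.inc_left {G : Multigraph V E} {e : E} {x y : V} (h : G.joins e x y) :
    G.inc x e := h.imp And.left And.right

theorem Multigraph.joins.inc_right {G : Multigraph V E} {e : E} {x y : V} (h : G.joins e x y) :
    G.inc y e := (h.imp And.right And.left).symm

section Subdivision

variable (G : Multigraph V E) (n : ℕ)

abbrev LnVert : Type := L2V G ⊕ E × Fin (n - 2)

def edgeOf : LnVert G n → E := Sum.elim (fun p => p.val.2) Prod.fst

def edgePath (e : E) : List (LnVert G n) :=
  .inl ⟨(G.fst e, e), Or.inl rfl⟩ ::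
    ((List.finRange (n - 2)).map (fun i => .inr (e, i)) ++ [.inl ⟨(G.snd e, e), Or.inr rfl⟩])

def traversalPath [DecidableEq V] (t : V × V × E) : List (LnVert G n) :=
  if t.1 = G.fst t.2.2 then edgePath G n t.2.2 else (edgePath G n t.2.2).reverse

variable {G n}

theorem mem_edgePath {e : E} {v : LnVert G n} : v ∈ edgePath G n e ↔ edgeOf G n v = e := by
  constructor
  · intro hv
    simp only [edgePath, List.mem_cons, List.mem_append, List.mem_map, List.not_mem_nil,
      or_false] at hv
    rcases hv with rfl | ⟨i, -, rfl⟩ | rfl <;> rfl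
  · rcases v with ⟨⟨x, e'⟩, hx⟩ | ⟨e', i⟩ <;> rintro (rfl : e' = e)
    · rcases hx with (rfl : G.fst e' = x) | (rfl : G.snd e' = x) <;> simp [edgePath]
    · simp [edgePath]

theorem nodup_edgePath (e : E) : (edgePath G n e).Nodup := by
  have hends :
      (.inl ⟨(G.fst e, e), Or.inl rfl⟩ : LnVert G n) ≠ .inl ⟨(G.snd e, e), Or.inr rfl⟩ :=
    fun h => G.loopless e (congrArg (fun p : L2V G => p.val.1) (Sum.inl_injective h))
  simpa [edgePath, List.nodup_append, hends] using
    (List.nodup_finRange _).map fun i j h => by simpa using h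

theorem head?_edgePath (e : E) :
    (edgePath G n e).head? = some (.inl ⟨(G.fst e, e), Or.inl rfl⟩) := rfl

theorem getLast?_edgePath (e : E) :
    (edgePath G n e).getLast? = some (.inl ⟨(G.snd e, e), Or.inr rfl⟩) := by
  rw [edgePath, ← List.cons_append, List.getLast?_concat]

theorem length_edgePath (hn : 2 ≤ n) (e : E) : (edgePath G n e).length = n := by
  simp [edgePath]; omega

theorem isChain_edgePath (adjH : C → C → Prop) (c : E → C) (hn : 2 ≤ n) (e : E) :
    (edgePath G n e).IsChain (LnGraph G adjH c n).Adj := by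
  obtain rfl | hn3 : n = 2 ∨ 3 ≤ n := by omega
  · -- without subdivision the joint-matching edge `f(x,e) f(y,e)` is itself an edge
    exact List.isChain_pair.2 (Or.inl (Or.inr (Or.inr ⟨rfl, rfl, G.loopless e⟩)))
  have hint : (List.finRange (n - 2)).map (fun i => (.inr (e, i) : LnVert G n)) ≠ [] := by
    simp [List.finRange_eq_nil_iff]; omega
  rw [edgePath, List.isChain_cons, List.isChain_append, List.head?_append_of_ne_nil _ hint]
  refine ⟨?_, isChain_map_finRange _ fun i j hij => Or.inl ⟨rfl, Or.inl hij⟩,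
    List.isChain_singleton _, ?_⟩
  · simp only [List.head?_map, Option.mem_map, forall_exists_index, and_imp]
    rintro _ i hi rfl
    exact Or.inl ⟨rfl, Or.inl ⟨rfl, val_eq_zero_of_mem_head?_finRange hi⟩⟩
  · simp only [List.getLast?_map, Option.mem_map, forall_exists_index, and_imp, List.head?_cons,
      Option.mem_some_iff]
    rintro _ i hi rfl _ rfl
    exact Or.inr ⟨rfl, Or.inr ⟨rfl, by rw [val_eq_of_mem_getLast?_finRange hi]; omega⟩⟩

end Subdivision

variable {G : Multigraph V E} {n : ℕ} {adjH : C → C → Prop} {c : E → C}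

section TraversalPath

variable [DecidableEq V] {t : V × V × E}

theorem traversalPath_ne_nil : traversalPath G n t ≠ [] := by
  unfold traversalPath; split <;> simp [edgePath]

theorem mem_traversalPath {v : LnVert G n} :
    v ∈ traversalPath G n t ↔ edgeOf G n v = t.2.2 := by
  unfold traversalPath; split <;> simp [mem_edgePath]

theorem nodup_traversalPath : (traversalPath G n t).Nodup := by
  unfold traversalPath; split
  · exact nodup_edgePath _
  · exact List.nodup_reverse.2 (nodup_edgePath _)

theorem length_traversalPath (hn : 2 ≤ n) : (traversalPath G n t).length = n := by
  unfold traversalPath; split <;> simp [length_edgePath hn]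

theorem isChain_traversalPath (hn : 2 ≤ n) :
    (traversalPath G n t).IsChain (LnGraph G adjH c n).Adj := by
  unfold traversalPath; split
  · exact isChain_edgePath adjH c hn _
  · exact List.isChain_reverse.2 ((isChain_edgePath adjH c hn _).imp fun _ _ h => h.symm)

theorem head?_traversalPath (ht : G.joins t.2.2 t.1 t.2.1) :
    (traversalPath G n t).head? = some (.inl ⟨(t.1, t.2.2), ht.inc_left⟩) := by
  obtain ⟨x, y, e⟩ := t
  rcases id ht with ⟨hx : G.fst e = x, hy : G.snd e = y⟩ |
      ⟨hy : G.fst e = y, hx : G.snd e = x⟩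
    <;> subst hx hy
  · simp [traversalPath, head?_edgePath]
  · simp [traversalPath, getLast?_edgePath, (G.loopless e).symm]

theorem getLast?_traversalPath (ht : G.joins t.2.2 t.1 t.2.1) :
    (traversalPath G n t).getLast? = some (.inl ⟨(t.2.1, t.2.2), ht.inc_right⟩) := by
  obtain ⟨x, y, e⟩ := t
  rcases id ht with ⟨hx : G.fst e = x, hy : G.snd e = y⟩ |
      ⟨hy : G.fst e = y, hx : G.snd e = x⟩
    <;> subst hx hy
  · simp [traversalPath, getLast?_edgePath]
  · simp [traversalPath, head?_edgePath, (G.loopless e).symm]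

end TraversalPath

theorem adj_of_dynStep {t t' : V × V × E} (ht : G.joins t.2.2 t.1 t.2.1)
    (ht' : G.joins t'.2.2 t'.1 t'.2.1) (hne : t.2.2 ≠ t'.2.2) (h : DynStep G adjH c t t') :
    (LnGraph G adjH c n).Adj (.inl ⟨(t.2.1, t.2.2), ht.inc_right⟩)
      (.inl ⟨(t'.1, t'.2.2), ht'.inc_left⟩) := by
  rcases h with ⟨hvert, hcol⟩ | ⟨hvert, -, -, hpar⟩
  · exact Or.inl (Or.inl ⟨hvert, hne, hcol⟩)
  · exact Or.inl (Or.inr (Or.inl ⟨fun h => ht.ne (hvert.trans h.symm), hne, hpar⟩))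

theorem not_dynStep_self {t : V × V × E} (ht : G.joins t.2.2 t.1 t.2.1) :
    ¬ DynStep G adjH c t t := by
  rintro (⟨h, -⟩ | ⟨-, -, h, -⟩)
  exacts [ht.ne h.symm, h rfl]

namespace IsClosedDynHTrail

variable {L : List (V × V × E)} (hL : IsClosedDynHTrail G adjH c L)
include hL

theorem two_le_length : 2 ≤ L.length := by
  obtain ⟨hne, -, hgood, hstep⟩ := hL
  rcases L with _ | ⟨t, _ | ⟨t', L⟩⟩
  · exact absurd rfl hne
  · exact absurd (hstep (t, t) (by simp)) (not_dynStep_self (hgood t (by simp)))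
  · simp

end IsClosedDynHTrail

section

variable [DecidableEq V] {L : List (V × V × E)}

theorem length_flatMap_traversalPath (hn : 2 ≤ n) :
    (L.flatMap (traversalPath G n)).length = L.length * n := by
  simp [List.length_flatMap, length_traversalPath hn]

theorem mem_flatMap_traversalPath (hall : ∀ e : E, e ∈ edgesOf L) (v : LnVert G n) :
    v ∈ L.flatMap (traversalPath G n) := by
  obtain ⟨t, ht, he⟩ := List.mem_map.1 (hall (edgeOf G n v))
  exact List.mem_flatMap.2 ⟨t, ht, mem_traversalPath.2 he.symm⟩

namespace IsClosedDynHTrail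

variable (hL : IsClosedDynHTrail G adjH c L)
include hL

theorem nodup_flatMap_traversalPath : (L.flatMap (traversalPath G n)).Nodup :=
  List.nodup_flatMap.2 ⟨fun _ _ => nodup_traversalPath, (List.pairwise_map.1 hL.2.1).imp
    fun hne _ hv hv' => hne ((mem_traversalPath.1 hv).symm.trans (mem_traversalPath.1 hv'))⟩

theorem cyclicChain_flatMap_traversalPath (hn : 2 ≤ n) :
    CyclicChain (LnGraph G adjH c n).Adj (L.flatMap (traversalPath G n)) := by
  -- an `H`-transition only yields an edge of `L_n^H(G)` between incidences of distinct edges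
  have hne : CyclicChain (fun t t' => t.2.2 ≠ t'.2.2) L := (cyclicChain_map _).1 <|
    cyclicChain_ne_of_nodup hL.2.1 (by simpa [edgesOf] using hL.two_le_length)
  obtain ⟨-, -, hgood, hsteps⟩ := hL
  refine CyclicChain.flatMap (fun _ _ => traversalPath_ne_nil) (fun _ _ => isChain_traversalPath hn)
    (((cyclicChain_iff_forall_mem_zip_rotate.2 hsteps).and hne).imp_of_mem ?_)
  rintro t ht t' ht' ⟨hstep, hedge⟩ _ hx _ hy
  rw [getLast?_traversalPath (hgood t ht), Option.mem_some_iff] at hx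
  rw [head?_traversalPath (hgood t' ht'), Option.mem_some_iff] at hy
  subst hx hy
  exact adj_of_dynStep (hgood t ht) (hgood t' ht') hedge hstep

end IsClosedDynHTrail

end

end

theorem euler_dynHTrail_imp_Ln_hamiltonian_general {V E C : Type}
    [Fintype V] [Fintype E] [DecidableEq V] [DecidableEq E]
    (G : Multigraph V E) (adjH : C → C → Prop) (c : E → C)
    (hEuler : ∃ L : List (V × V × E),
      IsClosedDynHTrail G adjH c L ∧ ∀ e : E, e ∈ edgesOf L) :
    ∀ n : ℕ, 2 ≤ n → (LnGraph G adjH c n).IsHamiltonian := by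
  intro n hn
  obtain ⟨L, hL, hall⟩ := hEuler
  refine isHamiltonian_of_cyclicChain hL.nodup_flatMap_traversalPath
    (mem_flatMap_traversalPath hall) ?_ (hL.cyclicChain_flatMap_traversalPath hn)
  rw [length_flatMap_traversalPath hn]
  nlinarith [hL.two_le_length]

/-- If the `H`-colored multigraph `G` has a closed Euler dynamic `H`-trail, then
`L_n^H(G)` is Hamiltonian for every `n ≥ 2`. -/
theorem euler_dynHTrail_imp_Ln_hamiltonian {V E C : Type}
    [Fintype V] [Fintype E] [DecidableEq V] [DecidableEq E]
    (G : Multigraph V E) (adjH : C → C → Prop) (hH : Symmetric adjH) (c : E → C)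
    (hEuler : ∃ L : List (V × V × E),
      IsClosedDynHTrail G adjH c L ∧ ∀ e : E, e ∈ edgesOf L) :
    ∀ n : ℕ, 2 ≤ n → (LnGraph G adjH c n).IsHamiltonian :=
  euler_dynHTrail_imp_Ln_hamiltonian_general G adjH c hEuler

end DynH
end
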